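/- arXiv:2410.10691 — 2 statements merged into one kernel-verified Lean document; each statement's English description precedes it below -/
import Mathlib

section
/- Reformulation of the steady state: for a finite strongly connected reversible graph G with reference vertex 1, the vector with components ρ_i = ∑_{T ∈ Θ_1} Pr_{Θ_1}(T) · exp(-S(T_i)), where Pr_{Θ_1}(T) = q(T)/∑_{T'∈Θ_1} q(T') is the arboreal distribution and T_i is the unique minimal path in T from i to the root 1, lies in the kernel of the Laplacian L(G) and satisfies ρ_1 = 1. -/
/-!
Let `w i` be the total weight of the spanning trees rooted at `i`. In a tree `T` rooted at `r`,
replacing each edge `a → b` of the path `T_i` by `b → a` (an edge, by reversibility) moves the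
root to `i` and multiplies the weight by `∏ ℓ(b→a)/ℓ(a→b) = exp (-S(T_i))`; reversing the path
back undoes this, so `ρ i = w i / w r`, which is `1` at `i = r`.

That `w` lies in the kernel of the Laplacian is the balance
`∑_{i ≠ j} ℓ(i→j) w i = (∑_{k ≠ j} ℓ(j→k)) w j` of the Markov chain tree theorem: both sides
count, with weights, the maps in which every vertex reaches `j` and none is fixed, cutting their
unique cycle (which passes through `j`) just before or just after `j`.
-/

open Finset

attribute [local instance] Classical.propDecidable

/-- `i → j` is an edge of the graph when its label is positive. -/
def IsEdge {n : ℕ} (ℓ : Fin n → Fin n → ℝ) (i j : Fin n) : Prop := 0 < ℓ i j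

/-- Strong connectivity: any two vertices are joined by a directed path of edges. -/
def StronglyConnected {n : ℕ} (ℓ : Fin n → Fin n → ℝ) : Prop :=
  ∀ i j : Fin n, Relation.ReflTransGen (IsEdge ℓ) i j

/-- Reversibility: `i → j` is an edge iff `j → i` is. -/
def Reversible {n : ℕ} (ℓ : Fin n → Fin n → ℝ) : Prop :=
  ∀ i j : Fin n, 0 < ℓ i j ↔ 0 < ℓ j i

/-- The Laplacian matrix: `L j i = ℓ i j` off the diagonal,
`L i i = -∑_{k ≠ i} ℓ i k`. -/
noncomputable def LabelLaplacian {n : ℕ} (ℓ : Fin n → Fin n → ℝ) :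
    Matrix (Fin n) (Fin n) ℝ :=
  fun j i => if j = i then -∑ k ∈ univ.filter (· ≠ i), ℓ i k else ℓ i j

/-- A spanning tree rooted at `r`, encoded as a parent map `t`: the root is fixed,
every other vertex has a positively-labelled edge to its parent, and iterating
the parent map from any vertex reaches the root. -/
def IsSpanningTree {n : ℕ} (ℓ : Fin n → Fin n → ℝ) (r : Fin n)
    (t : Fin n → Fin n) : Prop :=
  t r = r ∧ (∀ v, v ≠ r → 0 < ℓ v (t v)) ∧ ∀ v, ∃ k, t^[k] v = r

/-- `Θ_r`: the set of spanning trees rooted at `r`. -/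
noncomputable def Trees {n : ℕ} (ℓ : Fin n → Fin n → ℝ) (r : Fin n) :
    Finset (Fin n → Fin n) :=
  univ.filter (IsSpanningTree ℓ r)

/-- `q(T)`: the product of the edge labels over the edges of the tree. -/
noncomputable def treeWeight {n : ℕ} (ℓ : Fin n → Fin n → ℝ) (r : Fin n)
    (t : Fin n → Fin n) : ℝ :=
  ∏ v ∈ univ.filter (· ≠ r), ℓ v (t v)

/-- A directed path from `i` to `j`, as the list of visited vertices. -/
def IsPathFrom {n : ℕ} (ℓ : Fin n → Fin n → ℝ) (i j : Fin n)
    (p : List (Fin n)) : Prop :=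
  p.Chain' (IsEdge ℓ) ∧ p.head? = some i ∧ p.getLast? = some j

/-- A minimal (self-avoiding) path from `i` to `j`: all vertices distinct. -/
def IsMinPathFrom {n : ℕ} (ℓ : Fin n → Fin n → ℝ) (i j : Fin n)
    (p : List (Fin n)) : Prop :=
  IsPathFrom ℓ i j p ∧ p.Nodup

/-- `S(P)`: the action / entropy change of a path, the sum of
`log (ℓ(a→b)/ℓ(b→a))` over its consecutive pairs `a → b`. -/
noncomputable def pathAction {n : ℕ} (ℓ : Fin n → Fin n → ℝ)
    (p : List (Fin n)) : ℝ :=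
  ((p.zip p.tail).map (fun e => Real.log (ℓ e.1 e.2 / ℓ e.2 e.1))).sum

/-- `q(P)`: the product of the labels over the edges of a path. -/
noncomputable def pathWeight {n : ℕ} (ℓ : Fin n → Fin n → ℝ)
    (p : List (Fin n)) : ℝ :=
  ((p.zip p.tail).map (fun e => ℓ e.1 e.2)).prod

/-- The path from `i` to the root `r` along the parent map `t` (fuel `k`). -/
def treePathAux {n : ℕ} (t : Fin n → Fin n) (r : Fin n) :
    ℕ → Fin n → List (Fin n)
  | 0, i => [i]
  | k + 1, i => if i = r then [i] else i :: treePathAux t r k (t i)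

/-- `T_i`: the unique path from `i` to the root `r` on the spanning tree `t`. -/
def treePath {n : ℕ} (t : Fin n → Fin n) (r : Fin n) (i : Fin n) :
    List (Fin n) :=
  treePathAux t r n i

/-- The cycle condition: `S(C) = 0` for every directed cycle `C`
(a directed path whose first and last vertices agree). -/
def CycleCondition {n : ℕ} (ℓ : Fin n → Fin n → ℝ) : Prop :=
  ∀ p : List (Fin n), p.Chain' (IsEdge ℓ) → p.head? = p.getLast? →
    pathAction ℓ p = 0

/-- The tree-reversal map `Φ_{r,j}`: given a tree `t` rooted at `r`, reverse the
edges on the unique tree path from `j` to `r`, obtaining a tree rooted at `j`. -/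
def reverseTree {n : ℕ} (t : Fin n → Fin n) (r j : Fin n) : Fin n → Fin n :=
  fun v =>
    (((treePath t r j).zip (treePath t r j).tail).find? (fun e => e.2 == v)).elim
      (if v = j then j else t v) (fun e => e.1)

open Function

section HittingTime

variable {α : Type*}

-- Junk value `0` when `r` is never reached.
noncomputable def hittingTime (t : α → α) (r v : α) : ℕ :=
  if h : ∃ k, t^[k] v = r then Nat.find h else 0

variable {t : α → α} {r v : α}

lemma iterate_hittingTime (h : ∃ k, t^[k] v = r) : t^[hittingTime t r v] v = r := by
  rw [hittingTime, dif_pos h]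
  exact Nat.find_spec h

lemma iterate_ne_of_lt_hittingTime (h : ∃ k, t^[k] v = r) {k : ℕ}
    (hk : k < hittingTime t r v) : t^[k] v ≠ r := by
  rw [hittingTime, dif_pos h] at hk
  exact Nat.find_min h hk

lemma hittingTime_eq {m : ℕ} (hm : t^[m] v = r) (hlt : ∀ k < m, t^[k] v ≠ r) :
    hittingTime t r v = m := by
  rw [hittingTime, dif_pos ⟨m, hm⟩]
  exact (Nat.find_eq_iff _).2 ⟨hm, hlt⟩

@[simp]
lemma hittingTime_self : hittingTime t r r = 0 :=
  hittingTime_eq rfl (by simp)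

lemma hittingTime_eq_succ (h : ∃ k, t^[k] v = r) (hv : v ≠ r) :
    hittingTime t r v = hittingTime t r (t v) + 1 := by
  obtain ⟨d, hd⟩ : ∃ d, hittingTime t r v = d + 1 :=
    Nat.exists_eq_succ_of_ne_zero fun h0 => hv (by simpa [h0] using iterate_hittingTime h)
  have hd' : t^[d] (t v) = r := by
    rw [← iterate_succ_apply, Nat.succ_eq_add_one, ← hd, iterate_hittingTime h]
  rw [hd, hittingTime_eq hd' fun k hk => ?_]
  rw [← iterate_succ_apply]
  exact iterate_ne_of_lt_hittingTime h (by omega)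

lemma injOn_iterate_hittingTime (h : ∃ k, t^[k] v = r) :
    Set.InjOn (fun k => t^[k] v) (Set.Iic (hittingTime t r v)) := by
  -- if `t^[a] v = t^[b] v` with `a < b`, the root is reached after `d - (b - a) < d` steps
  have key : ∀ a b, a < b → b ≤ hittingTime t r v → t^[a] v ≠ t^[b] v := by
    intro a b hab hb he
    apply iterate_ne_of_lt_hittingTime h (k := hittingTime t r v - b + a) (by omega)
    rw [iterate_add_apply, he, ← iterate_add_apply, Nat.sub_add_cancel hb,
      iterate_hittingTime h]
  intro a ha b hb hab
  simp only [Set.mem_Iic] at ha hb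
  rcases lt_trichotomy a b with hlt | heq | hgt
  · exact absurd hab (key a b hlt hb)
  · exact heq
  · exact absurd hab.symm (key b a hgt ha)

lemma hittingTime_lt_card [Fintype α] (h : ∃ k, t^[k] v = r) :
    hittingTime t r v < Fintype.card α := by
  have hinj : Injective fun k : Fin (hittingTime t r v + 1) => t^[k] v :=
    fun a b hab => Fin.ext <| injOn_iterate_hittingTime h
      (Set.mem_Iic.2 (Nat.lt_succ_iff.1 a.2)) (Set.mem_Iic.2 (Nat.lt_succ_iff.1 b.2)) hab
  simpa using Fintype.card_le_of_injective _ hinj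

end HittingTime

section TreePath

variable {n : ℕ} {ℓ : Fin n → Fin n → ℝ}

@[simp]
lemma pathAction_singleton (v : Fin n) : pathAction ℓ [v] = 0 := by
  simp [pathAction]

lemma pathAction_cons_cons (a b : Fin n) (l : List (Fin n)) :
    pathAction ℓ (a :: b :: l) = Real.log (ℓ a b / ℓ b a) + pathAction ℓ (b :: l) := by
  simp [pathAction]

lemma treePathAux_eq_cons (t : Fin n → Fin n) (r : Fin n) (k : ℕ) (i : Fin n) :
    ∃ l, treePathAux t r k i = i :: l := by
  cases k with
  | zero => exact ⟨[], rfl⟩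
  | succ k => by_cases hi : i = r <;> simp [treePathAux, hi]

lemma exp_neg_pathAction_treePathAux {t : Fin n → Fin n} {r : Fin n}
    (ht : IsSpanningTree ℓ r t) (hrev : Reversible ℓ) {k : ℕ} {i : Fin n}
    (hk : hittingTime t r i ≤ k) :
    Real.exp (-pathAction ℓ (treePathAux t r k i)) =
      ∏ j ∈ range (hittingTime t r i), ℓ (t^[j + 1] i) (t^[j] i) / ℓ (t^[j] i) (t^[j + 1] i) := by
  induction k generalizing i with
  | zero => simp [treePathAux, Nat.le_zero.1 hk]
  | succ k ih =>
    by_cases hi : i = r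
    · subst hi
      simp [treePathAux]
    have hd := hittingTime_eq_succ (ht.2.2 i) hi
    have hedge : 0 < ℓ i (t i) := ht.2.1 i hi
    have hedge' : 0 < ℓ (t i) i := (hrev _ _).1 hedge
    obtain ⟨l, hl⟩ := treePathAux_eq_cons t r k (t i)
    rw [treePathAux, if_neg hi, hl, pathAction_cons_cons, ← hl, neg_add, Real.exp_add,
      ih (by omega), ← Real.log_inv, inv_div, Real.exp_log (div_pos hedge' hedge), hd,
      prod_range_succ', mul_comm]
    simp only [iterate_succ_apply, iterate_zero, id]

lemma exp_neg_pathAction_treePath {t : Fin n → Fin n} {r : Fin n}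
    (ht : IsSpanningTree ℓ r t) (hrev : Reversible ℓ) (i : Fin n) :
    Real.exp (-pathAction ℓ (treePath t r i)) =
      ∏ j ∈ range (hittingTime t r i), ℓ (t^[j + 1] i) (t^[j] i) / ℓ (t^[j] i) (t^[j + 1] i) :=
  exp_neg_pathAction_treePathAux ht hrev <| by
    simpa using (hittingTime_lt_card (ht.2.2 i)).le

end TreePath

section RootPath

variable {α : Type*}

structure IsRootPath (F : α → α) (γ : ℕ → α) (m : ℕ) : Prop where
  root : F (γ 0) = γ 0
  step : ∀ j < m, F (γ (j + 1)) = γ j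
  injOn : Set.InjOn γ (Set.Iic m)

variable {F : α → α} {γ : ℕ → α} {m : ℕ}

lemma IsRootPath.iterate_apply (h : IsRootPath F γ m) {j : ℕ} (hj : j ≤ m) :
    F^[j] (γ m) = γ (m - j) := by
  induction j with
  | zero => rfl
  | succ j ih =>
    rw [iterate_succ_apply', ih (by omega)]
    obtain ⟨p, hp⟩ : ∃ p, m - j = p + 1 := ⟨m - j - 1, by omega⟩
    rw [hp, h.step p (by omega)]
    congr 1
    omega

lemma IsRootPath.hittingTime_eq (h : IsRootPath F γ m) : hittingTime F (γ 0) (γ m) = m :=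
  _root_.hittingTime_eq (by simpa using h.iterate_apply le_rfl) fun j hj he => by
    rw [h.iterate_apply hj.le] at he
    have := h.injOn (Set.mem_Iic.2 (Nat.sub_le m j)) (Set.mem_Iic.2 (Nat.zero_le m)) he
    omega

noncomputable def pathFromRoot (T : α → α) (r i : α) (k : ℕ) : α :=
  T^[hittingTime T r i - k] i

variable {T : α → α} {r i : α}

lemma pathFromRoot_zero (h : ∃ k, T^[k] i = r) : pathFromRoot T r i 0 = r := by
  simpa [pathFromRoot] using iterate_hittingTime h

@[simp]
lemma pathFromRoot_hittingTime : pathFromRoot T r i (hittingTime T r i) = i := by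
  simp [pathFromRoot]

lemma isRootPath_pathFromRoot (hroot : T r = r) (h : ∃ k, T^[k] i = r) :
    IsRootPath T (pathFromRoot T r i) (hittingTime T r i) where
  root := by rw [pathFromRoot_zero h, hroot]
  step j hj := by
    rw [pathFromRoot, pathFromRoot, ← iterate_succ_apply' T, Nat.succ_eq_add_one,
      show hittingTime T r i - (j + 1) + 1 = hittingTime T r i - j by omega]
  injOn a ha b hb he := by
    have := injOn_iterate_hittingTime h (Set.mem_Iic.2 (Nat.sub_le _ a))
      (Set.mem_Iic.2 (Nat.sub_le _ b)) he
    simp only [Set.mem_Iic] at ha hb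
    omega

end RootPath

section Reroot

variable {α : Type*} [DecidableEq α]

def rerootStep (F : α → α) (u c : α) : α → α :=
  update (update F u c) c c

def rerootAlong (F : α → α) (γ : ℕ → α) : ℕ → α → α
  | 0 => F
  | k + 1 => rerootStep (rerootAlong F γ k) (γ k) (γ (k + 1))

variable {F : α → α} {γ : ℕ → α} {m k : ℕ}

lemma rerootStep_rerootStep {u c : α} (hu : F u = u) (hc : F c = u) :
    rerootStep (rerootStep F u c) c u = F := by
  funext v
  by_cases hvu : v = u
  · subst hvu
    simp [rerootStep, hu]
  by_cases hvc : v = c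
  · subst hvc
    simp [rerootStep, hc, hvu]
  simp [rerootStep, hvu, hvc]

lemma rerootAlong_congr {γ' : ℕ → α} (h : ∀ j ≤ k, γ j = γ' j) :
    rerootAlong F γ k = rerootAlong F γ' k := by
  induction k with
  | zero => rfl
  | succ k ih =>
    simp only [rerootAlong, ih fun j hj => h j (by omega), h k (by omega), h (k + 1) le_rfl]

lemma rerootAlong_apply_of_forall_ne {v : α} (hv : ∀ j ≤ k, v ≠ γ j) :
    rerootAlong F γ k v = F v := by
  induction k with
  | zero => rfl
  | succ k ih =>
    rw [rerootAlong, rerootStep, update_of_ne (hv _ le_rfl), update_of_ne (hv k (by omega)),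
      ih fun j hj => hv j (by omega)]

lemma rerootAlong_apply_self (h0 : F (γ 0) = γ 0) (k : ℕ) :
    rerootAlong F γ k (γ k) = γ k := by
  cases k with
  | zero => exact h0
  | succ k => simp [rerootAlong, rerootStep]

lemma rerootAlong_apply_of_lt (hinj : Set.InjOn γ (Set.Iic k)) {j : ℕ} (hj : j < k) :
    rerootAlong F γ k (γ j) = γ (j + 1) := by
  induction k with
  | zero => omega
  | succ k ih =>
    have hne : γ j ≠ γ (k + 1) := fun he => by
      have := hinj (Set.mem_Iic.2 hj.le) (Set.mem_Iic.2 le_rfl) he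
      omega
    rw [rerootAlong, rerootStep, update_of_ne hne]
    rcases (Nat.lt_succ_iff.1 hj).lt_or_eq with hjk | rfl
    · have hne' : γ j ≠ γ k := fun he => by
        have := hinj (Set.mem_Iic.2 hj.le) (Set.mem_Iic.2 (Nat.le_succ k)) he
        omega
      rw [update_of_ne hne', ih (hinj.mono (Set.Iic_subset_Iic.2 (Nat.le_succ k))) hjk]
    · exact update_self _ _ _

lemma IsRootPath.rerootAlong_apply_succ (h : IsRootPath F γ m) (hk : k < m) :
    rerootAlong F γ k (γ (k + 1)) = γ k := by
  rw [rerootAlong_apply_of_forall_ne fun j hj he => by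
    have := h.injOn (Set.mem_Iic.2 (by omega)) (Set.mem_Iic.2 (by omega)) he
    omega]
  exact h.step k hk

lemma IsRootPath.reverse (h : IsRootPath F γ m) :
    IsRootPath (rerootAlong F γ m) (fun j => γ (m - j)) m where
  root := rerootAlong_apply_self h.root m
  step j hj := by
    have := rerootAlong_apply_of_lt (F := F) h.injOn (show m - (j + 1) < m by omega)
    rwa [show m - (j + 1) + 1 = m - j by omega] at this
  injOn a ha b hb he := by
    have := h.injOn (Set.mem_Iic.2 (Nat.sub_le m a)) (Set.mem_Iic.2 (Nat.sub_le m b)) he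
    simp only [Set.mem_Iic] at ha hb
    omega

lemma IsRootPath.rerootAlong_reverse (h : IsRootPath F γ m) (hk : k ≤ m) :
    rerootAlong (rerootAlong F γ m) (fun j => γ (m - j)) k = rerootAlong F γ (m - k) := by
  induction k with
  | zero => rfl
  | succ k ih =>
    obtain ⟨p, hp⟩ : ∃ p, m - k = p + 1 := ⟨m - k - 1, by omega⟩
    rw [rerootAlong, ih (by omega), hp, show m - (k + 1) = p by omega, rerootAlong]
    exact rerootStep_rerootStep (rerootAlong_apply_self h.root p)
      (h.rerootAlong_apply_succ (by omega))

-- The tree reversal `Φ_{r,i}` of the paper (`reverseTree`), performed one edge at a time from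
-- the root down to `i`.
noncomputable def rerootAt (T : α → α) (r i : α) : α → α :=
  rerootAlong T (pathFromRoot T r i) (hittingTime T r i)

variable {T : α → α} {r i : α}

lemma IsRootPath.rerootAt_eq (h : IsRootPath F γ m) :
    rerootAt F (γ 0) (γ m) = rerootAlong F γ m := by
  rw [rerootAt, h.hittingTime_eq]
  refine rerootAlong_congr fun j hj => ?_
  rw [pathFromRoot, h.hittingTime_eq, h.iterate_apply (Nat.sub_le m j),
    Nat.sub_sub_self hj]

lemma rerootAt_rerootAt (hroot : T r = r) (h : ∃ k, T^[k] i = r) :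
    rerootAt (rerootAt T r i) i r = T := by
  have hp := isRootPath_pathFromRoot hroot h
  have := hp.reverse.rerootAt_eq
  simp only [Nat.sub_zero, Nat.sub_self, pathFromRoot_hittingTime, pathFromRoot_zero h] at this
  change rerootAt (rerootAlong T _ _) i r = T
  rw [this, hp.rerootAlong_reverse le_rfl, Nat.sub_self]
  rfl

end Reroot

section SpanningTree

variable {n : ℕ} {ℓ : Fin n → Fin n → ℝ}

@[simp]
lemma mem_Trees {r : Fin n} {T : Fin n → Fin n} : T ∈ Trees ℓ r ↔ IsSpanningTree ℓ r T := by
  simp [Trees]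

lemma treeWeight_eq_prod_erase (r : Fin n) (T : Fin n → Fin n) :
    treeWeight ℓ r T = ∏ v ∈ univ.erase r, ℓ v (T v) := by
  rw [treeWeight, filter_ne']

variable {F : Fin n → Fin n} {γ : ℕ → Fin n} {m k : ℕ}

lemma isSpanningTree_rerootStep {u c : Fin n} (hF : IsSpanningTree ℓ u F) (hc : F c = u)
    (hℓ : 0 < ℓ u c) : IsSpanningTree ℓ c (rerootStep F u c) := by
  have hoff : ∀ v, v ≠ u → v ≠ c → rerootStep F u c v = F v := fun v hvu hvc => by
    simp [rerootStep, hvu, hvc]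
  refine ⟨by simp [rerootStep], fun v hvc => ?_, fun v => ?_⟩
  · by_cases hvu : v = u
    · subst hvu
      simpa [rerootStep, hvc] using hℓ
    · rw [hoff v hvu hvc]
      exact hF.2.1 v hvu
  · induction hd : hittingTime F u v using Nat.strong_induction_on generalizing v with
    | _ d ih =>
    by_cases hvc : v = c
    · exact ⟨0, hvc⟩
    by_cases hvu : v = u
    · subst hvu
      exact ⟨1, by simp [rerootStep, hvc]⟩
    obtain ⟨k, hk⟩ := ih _ (by rw [← hd, hittingTime_eq_succ (hF.2.2 v) hvu]; omega) (F v) rfl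
    exact ⟨k + 1, by rwa [iterate_succ_apply, hoff v hvu hvc]⟩

lemma treeWeight_rerootStep {u c : Fin n} (hc : F c = u) (hcu : c ≠ u) :
    treeWeight ℓ c (rerootStep F u c) * ℓ c u = treeWeight ℓ u F * ℓ u c := by
  have hoff : ∀ v ∈ (univ.erase u).erase c, ℓ v (rerootStep F u c v) = ℓ v (F v) :=
    fun v hv => by
      simp [rerootStep, (mem_erase.1 hv).1, (mem_erase.1 (mem_erase.1 hv).2).1]
  rw [treeWeight_eq_prod_erase, treeWeight_eq_prod_erase,
    ← mul_prod_erase (univ.erase c) _ (mem_erase.2 ⟨hcu.symm, mem_univ u⟩),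
    ← mul_prod_erase (univ.erase u) _ (mem_erase.2 ⟨hcu, mem_univ c⟩), erase_right_comm,
    prod_congr rfl hoff]
  rw [rerootStep, update_of_ne hcu.symm, update_self, hc]
  ring

lemma isSpanningTree_rerootAlong (hF : IsSpanningTree ℓ (γ 0) F) (h : IsRootPath F γ m)
    (hℓ : ∀ j < m, 0 < ℓ (γ j) (γ (j + 1))) (hk : k ≤ m) :
    IsSpanningTree ℓ (γ k) (rerootAlong F γ k) := by
  induction k with
  | zero => exact hF
  | succ k ih =>
    exact isSpanningTree_rerootStep (ih (by omega)) (h.rerootAlong_apply_succ hk) (hℓ k hk)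

lemma treeWeight_rerootAlong (h : IsRootPath F γ m) (hk : k ≤ m) :
    treeWeight ℓ (γ k) (rerootAlong F γ k) * ∏ j ∈ range k, ℓ (γ (j + 1)) (γ j) =
      treeWeight ℓ (γ 0) F * ∏ j ∈ range k, ℓ (γ j) (γ (j + 1)) := by
  induction k with
  | zero => simp [rerootAlong]
  | succ k ih =>
    have hne : γ (k + 1) ≠ γ k := fun he => by
      have := h.injOn (Set.mem_Iic.2 hk) (Set.mem_Iic.2 (by omega)) he
      omega
    have hstep := treeWeight_rerootStep (ℓ := ℓ) (h.rerootAlong_apply_succ hk) hne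
    rw [rerootAlong, prod_range_succ, prod_range_succ]
    linear_combination
      (∏ j ∈ range k, ℓ (γ (j + 1)) (γ j)) * hstep + ℓ (γ k) (γ (k + 1)) * ih (by omega)

variable {T : Fin n → Fin n} {r : Fin n}

lemma pathFromRoot_edge_pos (hT : IsSpanningTree ℓ r T) {i : Fin n} {j : ℕ}
    (hj : j < hittingTime T r i) :
    0 < ℓ (pathFromRoot T r i (j + 1)) (pathFromRoot T r i j) := by
  rw [← (isRootPath_pathFromRoot hT.1 (hT.2.2 i)).step j hj]
  exact hT.2.1 _ (iterate_ne_of_lt_hittingTime (hT.2.2 i) (by omega))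

lemma isSpanningTree_rerootAt (hT : IsSpanningTree ℓ r T) (hrev : Reversible ℓ) (i : Fin n) :
    IsSpanningTree ℓ i (rerootAt T r i) := by
  have hT0 : IsSpanningTree ℓ (pathFromRoot T r i 0) T := by
    rwa [pathFromRoot_zero (hT.2.2 i)]
  have := isSpanningTree_rerootAlong hT0 (isRootPath_pathFromRoot hT.1 (hT.2.2 i))
    (fun j hj => (hrev _ _).1 (pathFromRoot_edge_pos hT hj)) le_rfl
  rwa [pathFromRoot_hittingTime] at this

lemma treeWeight_rerootAt (hT : IsSpanningTree ℓ r T) (hrev : Reversible ℓ) (i : Fin n) :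
    treeWeight ℓ r T * Real.exp (-pathAction ℓ (treePath T r i)) =
      treeWeight ℓ i (rerootAt T r i) := by
  have hw := treeWeight_rerootAlong (ℓ := ℓ) (isRootPath_pathFromRoot hT.1 (hT.2.2 i)) le_rfl
  rw [pathFromRoot_zero (hT.2.2 i), pathFromRoot_hittingTime] at hw
  have hB : 0 < ∏ j ∈ range (hittingTime T r i),
      ℓ (pathFromRoot T r i (j + 1)) (pathFromRoot T r i j) :=
    prod_pos fun j hj => pathFromRoot_edge_pos hT (mem_range.1 hj)
  -- `treePath T r i` runs along `pathFromRoot T r i` backwards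
  have hexp : Real.exp (-pathAction ℓ (treePath T r i)) =
      (∏ j ∈ range (hittingTime T r i), ℓ (pathFromRoot T r i j) (pathFromRoot T r i (j + 1))) /
        ∏ j ∈ range (hittingTime T r i), ℓ (pathFromRoot T r i (j + 1)) (pathFromRoot T r i j) := by
    rw [exp_neg_pathAction_treePath hT hrev, ← prod_div_distrib, ← prod_range_reflect]
    refine prod_congr rfl fun j hj => ?_
    have := mem_range.1 hj
    simp only [pathFromRoot]
    rw [show hittingTime T r i - (j + 1) = hittingTime T r i - 1 - j by omega,
      show hittingTime T r i - 1 - j + 1 = hittingTime T r i - j by omega]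
  rw [hexp, ← mul_div_assoc, ← hw, mul_div_cancel_right₀ _ hB.ne', rerootAt]

noncomputable def treeSum (ℓ : Fin n → Fin n → ℝ) (r : Fin n) : ℝ :=
  ∑ T ∈ Trees ℓ r, treeWeight ℓ r T

lemma sum_treeWeight_mul_exp_neg_pathAction (hrev : Reversible ℓ) (r i : Fin n) :
    ∑ T ∈ Trees ℓ r, treeWeight ℓ r T * Real.exp (-pathAction ℓ (treePath T r i)) =
      treeSum ℓ i :=
  sum_nbij' (rerootAt · r i) (rerootAt · i r)
    (fun _ hT => mem_Trees.2 (isSpanningTree_rerootAt (mem_Trees.1 hT) hrev i))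
    (fun _ hT => mem_Trees.2 (isSpanningTree_rerootAt (mem_Trees.1 hT) hrev r))
    (fun _ hT => rerootAt_rerootAt (mem_Trees.1 hT).1 ((mem_Trees.1 hT).2.2 i))
    (fun _ hT => rerootAt_rerootAt (mem_Trees.1 hT).1 ((mem_Trees.1 hT).2.2 r))
    (fun _ hT => treeWeight_rerootAt (mem_Trees.1 hT) hrev i)

end SpanningTree

section CyclePred

variable {α : Type*}

lemma iterate_update_of_forall_ne [DecidableEq α] {f : α → α} {p y x : α} {a : ℕ}
    (h : ∀ m < a, f^[m] x ≠ p) : (update f p y)^[a] x = f^[a] x := by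
  induction a with
  | zero => rfl
  | succ a ih =>
    rw [iterate_succ_apply', iterate_succ_apply', ih fun m hm => h m (by omega),
      update_of_ne (h a (by omega))]

lemma iterate_update_hittingTime [DecidableEq α] {f : α → α} {p x : α}
    (h : ∃ k, f^[k] x = p) (y : α) : (update f p y)^[hittingTime f p x] x = p := by
  rw [iterate_update_of_forall_ne fun m hm => iterate_ne_of_lt_hittingTime h hm,
    iterate_hittingTime h]

noncomputable def cyclePred (f : α → α) (j : α) : α :=
  f^[hittingTime f j (f j)] j

variable {f : α → α} {j : α}

lemma apply_cyclePred (h : ∃ k, f^[k] (f j) = j) : f (cyclePred f j) = j := by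
  rw [cyclePred, ← iterate_succ_apply' f, iterate_succ_apply, iterate_hittingTime h]

lemma cyclePred_ne (h : ∃ k, f^[k] (f j) = j) (hj : f j ≠ j) : cyclePred f j ≠ j := by
  intro he
  obtain ⟨d, hd⟩ : ∃ d, hittingTime f j (f j) = d + 1 :=
    Nat.exists_eq_succ_of_ne_zero fun h0 => hj (by simpa [h0] using iterate_hittingTime h)
  rw [cyclePred, hd, iterate_succ_apply] at he
  exact iterate_ne_of_lt_hittingTime h (by omega) he

lemma exists_iterate_eq_cyclePred (hre : ∀ v, ∃ k, f^[k] v = j) (v : α) :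
    ∃ k, f^[k] v = cyclePred f j := by
  obtain ⟨k, hk⟩ := hre v
  exact ⟨hittingTime f j (f j) + k, by rw [iterate_add_apply, hk, cyclePred]⟩

lemma cyclePred_update [DecidableEq α] {T : α → α} {i : α} (h : ∃ k, T^[k] j = i) :
    cyclePred (update T i j) j = i := by
  have hagree : ∀ m ≤ hittingTime T i j, (update T i j)^[m] j = T^[m] j := fun m hm =>
    iterate_update_of_forall_ne fun k hk => iterate_ne_of_lt_hittingTime h (by omega)
  have hcycle : hittingTime (update T i j) j (update T i j j) = hittingTime T i j := by
    refine hittingTime_eq ?_ fun k hk he => ?_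
    · rw [← iterate_succ_apply, iterate_succ_apply', hagree _ le_rfl, iterate_hittingTime h,
        update_self]
    · rw [← iterate_succ_apply, hagree _ hk] at he
      have := injOn_iterate_hittingTime h (Set.mem_Iic.2 hk) (Set.mem_Iic.2 (Nat.zero_le _)) he
      omega
  rw [cyclePred, hcycle, hagree _ le_rfl, iterate_hittingTime h]

end CyclePred

section Balance

variable {n : ℕ} {ℓ : Fin n → Fin n → ℝ} {T f : Fin n → Fin n} {p : Fin n}

lemma apply_ne_self_of_isSpanningTree (hT : IsSpanningTree ℓ p T) {v : Fin n} (hv : v ≠ p) :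
    T v ≠ v := fun hfix => hv <| by
  obtain ⟨k, hk⟩ := hT.2.2 v
  rwa [iterate_fixed hfix] at hk

lemma isSpanningTree_update_self (hpos : ∀ v, 0 < ℓ v (f v)) (hre : ∀ v, ∃ k, f^[k] v = p) :
    IsSpanningTree ℓ p (update f p p) :=
  ⟨update_self _ _ _, fun v hv => by rw [update_of_ne hv]; exact hpos v,
    fun v => ⟨_, iterate_update_hittingTime (hre v) p⟩⟩

lemma prod_update_eq_mul_treeWeight (T : Fin n → Fin n) (p y : Fin n) :
    ∏ v, ℓ v (update T p y v) = ℓ p y * treeWeight ℓ p T := by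
  rw [treeWeight_eq_prod_erase, ← mul_prod_erase univ _ (mem_univ p), update_self]
  exact congrArg _ (prod_congr rfl fun v hv => by rw [update_of_ne (ne_of_mem_erase hv)])

-- Every vertex reaches `j`, so the unique cycle of such a map `f` passes through `j`: `f` is a
-- tree rooted at `j` plus an edge out of `j`, and also a tree rooted at `cyclePred f j` plus the
-- edge into `j`.
noncomputable def unicyclicMaps (ℓ : Fin n → Fin n → ℝ) (j : Fin n) : Finset (Fin n → Fin n) :=
  univ.filter fun f => (∀ v, f v ≠ v) ∧ (∀ v, 0 < ℓ v (f v)) ∧ ∀ v, ∃ k, f^[k] v = j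

lemma update_mem_unicyclicMaps {y j : Fin n} (hT : IsSpanningTree ℓ p T) (hy : y ≠ p)
    (hℓ : 0 < ℓ p y) (hre : ∀ v, ∃ k, (update T p y)^[k] v = j) :
    update T p y ∈ unicyclicMaps ℓ j := by
  simp only [unicyclicMaps, mem_filter, mem_univ, true_and]
  refine ⟨fun v => ?_, fun v => ?_, hre⟩ <;> by_cases hv : v = p
  · subst hv
    simpa using hy
  · rw [update_of_ne hv]
    exact apply_ne_self_of_isSpanningTree hT hv
  · subst hv
    simpa using hℓ
  · rw [update_of_ne hv]
    exact hT.2.1 v hv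

lemma sum_inEdge_treeWeight_eq_sum_unicyclicMaps (j : Fin n) :
    ∑ x ∈ ((univ.erase j).filter fun i => 0 < ℓ i j).sigma (Trees ℓ),
      ℓ x.1 j * treeWeight ℓ x.1 x.2 = ∑ f ∈ unicyclicMaps ℓ j, ∏ v, ℓ v (f v) := by
  refine sum_nbij' (fun x => update x.2 x.1 j)
    (fun f => ⟨cyclePred f j, update f (cyclePred f j) (cyclePred f j)⟩) ?_ ?_ ?_ ?_ ?_
  · rintro ⟨i, T⟩ hx
    simp only [mem_sigma, mem_filter, mem_erase, mem_univ, and_true, mem_Trees] at hx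
    obtain ⟨⟨hij, hℓ⟩, hT⟩ := hx
    refine update_mem_unicyclicMaps hT (Ne.symm hij) hℓ fun v => ⟨hittingTime T i v + 1, ?_⟩
    dsimp only
    rw [iterate_succ_apply', iterate_update_hittingTime (hT.2.2 v), update_self]
  · intro f hf
    simp only [unicyclicMaps, mem_filter, mem_univ, true_and] at hf
    obtain ⟨hfix, hpos, hre⟩ := hf
    have hcyc : ∃ k, f^[k] (f j) = j := hre (f j)
    simp only [mem_sigma, mem_filter, mem_erase, mem_univ, and_true, mem_Trees]
    refine ⟨⟨cyclePred_ne hcyc (hfix j), ?_⟩,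
      isSpanningTree_update_self hpos (exists_iterate_eq_cyclePred hre)⟩
    simpa [apply_cyclePred hcyc] using hpos (cyclePred f j)
  · rintro ⟨i, T⟩ hx
    simp only [mem_sigma, mem_filter, mem_erase, mem_univ, and_true, mem_Trees] at hx
    obtain ⟨-, hT⟩ := hx
    dsimp only
    rw [cyclePred_update (hT.2.2 j), update_idem, update_eq_self_iff.2 hT.1.symm]
  · intro f hf
    simp only [unicyclicMaps, mem_filter, mem_univ, true_and] at hf
    dsimp only
    rw [update_idem, update_eq_self_iff.2 (apply_cyclePred (hf.2.2 (f j))).symm]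
  · rintro ⟨i, T⟩ -
    exact (prod_update_eq_mul_treeWeight T i j).symm

lemma sum_outEdge_treeWeight_eq_sum_unicyclicMaps (j : Fin n) :
    ∑ x ∈ ((univ.erase j).filter fun k => 0 < ℓ j k).sigma (fun _ => Trees ℓ j),
      ℓ j x.1 * treeWeight ℓ j x.2 = ∑ f ∈ unicyclicMaps ℓ j, ∏ v, ℓ v (f v) := by
  refine sum_nbij' (fun x => update x.2 j x.1) (fun f => ⟨f j, update f j j⟩) ?_ ?_ ?_ ?_ ?_
  · rintro ⟨k, T⟩ hx
    simp only [mem_sigma, mem_filter, mem_erase, mem_univ, and_true, mem_Trees] at hx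
    obtain ⟨⟨hkj, hℓ⟩, hT⟩ := hx
    exact update_mem_unicyclicMaps hT hkj hℓ fun v =>
      ⟨_, iterate_update_hittingTime (hT.2.2 v) k⟩
  · intro f hf
    simp only [unicyclicMaps, mem_filter, mem_univ, true_and] at hf
    obtain ⟨hfix, hpos, hre⟩ := hf
    simp only [mem_sigma, mem_filter, mem_erase, mem_univ, and_true, mem_Trees]
    exact ⟨⟨hfix j, hpos j⟩, isSpanningTree_update_self hpos hre⟩
  · rintro ⟨k, T⟩ hx
    simp only [mem_sigma, mem_Trees] at hx
    dsimp only
    rw [update_self, update_idem, update_eq_self_iff.2 hx.2.1.symm]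
  · rintro f -
    dsimp only
    rw [update_idem, update_eq_self]
  · rintro ⟨k, T⟩ -
    exact (prod_update_eq_mul_treeWeight T j k).symm

lemma treeSum_balance (hℓ : ∀ i j, 0 ≤ ℓ i j) (j : Fin n) :
    ∑ i ∈ univ.erase j, ℓ i j * treeSum ℓ i = (∑ k ∈ univ.erase j, ℓ j k) * treeSum ℓ j :=
  calc ∑ i ∈ univ.erase j, ℓ i j * treeSum ℓ i
      = ∑ i ∈ (univ.erase j).filter (fun i => 0 < ℓ i j), ℓ i j * treeSum ℓ i :=
        (sum_filter_of_ne fun i _ h => (hℓ i j).lt_of_ne' (left_ne_zero_of_mul h)).symm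
    _ = ∑ f ∈ unicyclicMaps ℓ j, ∏ v, ℓ v (f v) := by
        rw [← sum_inEdge_treeWeight_eq_sum_unicyclicMaps, sum_sigma]
        simp_rw [treeSum, mul_sum]
    _ = ∑ k ∈ (univ.erase j).filter (fun k => 0 < ℓ j k), ℓ j k * treeSum ℓ j := by
        rw [← sum_outEdge_treeWeight_eq_sum_unicyclicMaps, sum_sigma]
        simp_rw [treeSum, mul_sum]
    _ = (∑ k ∈ univ.erase j, ℓ j k) * treeSum ℓ j := by
        rw [sum_mul]
        exact sum_filter_of_ne fun k _ h => (hℓ j k).lt_of_ne' (left_ne_zero_of_mul h)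

lemma labelLaplacian_mulVec_apply (x : Fin n → ℝ) (j : Fin n) :
    (LabelLaplacian ℓ).mulVec x j =
      ∑ i ∈ univ.erase j, ℓ i j * x i - (∑ k ∈ univ.erase j, ℓ j k) * x j := by
  rw [Matrix.mulVec, dotProduct, ← add_sum_erase _ _ (mem_univ j),
    sum_congr rfl fun i hi => by rw [LabelLaplacian, if_neg (ne_of_mem_erase hi).symm]]
  simp only [LabelLaplacian, filter_ne', ↓reduceIte]
  ring

lemma labelLaplacian_mulVec_treeSum (hℓ : ∀ i j, 0 ≤ ℓ i j) :
    (LabelLaplacian ℓ).mulVec (treeSum ℓ) = 0 :=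
  funext fun j => by rw [labelLaplacian_mulVec_apply, treeSum_balance hℓ, sub_self, Pi.zero_apply]

end Balance

section Existence

variable {n : ℕ} {ℓ : Fin n → Fin n → ℝ} {r : Fin n}

lemma exists_isSpanningTree_of_descent (μ : Fin n → ℕ)
    (hμ : ∀ v ≠ r, ∃ u, 0 < ℓ v u ∧ μ u < μ v) : ∃ T, IsSpanningTree ℓ r T := by
  choose u hu hlt using hμ
  refine ⟨fun v => if hv : v = r then r else u v hv, by simp,
    fun v hv => by simpa [hv] using hu v hv, fun v => ?_⟩
  induction hd : μ v using Nat.strong_induction_on generalizing v with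
  | _ d ih =>
  by_cases hv : v = r
  · exact ⟨0, hv⟩
  obtain ⟨k, hk⟩ := ih _ (hd ▸ hlt v hv) (u v hv) rfl
  exact ⟨k + 1, by rwa [iterate_succ_apply, dif_neg hv]⟩

lemma exists_descent_of_stronglyConnected (hsc : StronglyConnected ℓ) (r : Fin n) :
    ∃ μ : Fin n → ℕ, ∀ v ≠ r, ∃ u, 0 < ℓ v u ∧ μ u < μ v := by
  have hex : ∀ v, ∃ m, ∃ l : List (Fin n), l.length = m ∧ (v :: l).IsChain (IsEdge ℓ) ∧
      (v :: l).getLast (List.cons_ne_nil _ _) = r := fun v => by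
    obtain ⟨l, hc, hl⟩ := List.exists_isChain_cons_of_relationReflTransGen (hsc v r)
    exact ⟨_, l, rfl, hc, hl⟩
  refine ⟨fun v => Nat.find (hex v), fun v hv => ?_⟩
  obtain ⟨l, hlen, hc, hlast⟩ := Nat.find_spec (hex v)
  cases l with
  | nil => exact absurd hlast hv
  | cons u l =>
    rw [List.isChain_cons_cons] at hc
    rw [List.getLast_cons_cons] at hlast
    refine ⟨u, hc.1, ?_⟩
    have : Nat.find (hex u) ≤ l.length := Nat.find_le ⟨l, rfl, hc.2, hlast⟩
    simp only [List.length_cons] at hlen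
    show Nat.find (hex u) < Nat.find (hex v)
    omega

lemma treeWeight_pos {T : Fin n → Fin n} (hT : IsSpanningTree ℓ r T) : 0 < treeWeight ℓ r T :=
  prod_pos fun v hv => hT.2.1 v (mem_filter.1 hv).2

lemma treeSum_pos (hsc : StronglyConnected ℓ) (r : Fin n) : 0 < treeSum ℓ r := by
  obtain ⟨μ, hμ⟩ := exists_descent_of_stronglyConnected hsc r
  obtain ⟨T, hT⟩ := exists_isSpanningTree_of_descent μ hμ
  exact sum_pos' (fun T' hT' => (treeWeight_pos (mem_Trees.1 hT')).le)
    ⟨T, mem_Trees.2 hT, treeWeight_pos hT⟩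

end Existence

/-- Reformulation of the steady state: the vector
`ρ_i = ∑_{T ∈ Θ_1} Pr_{Θ_1}(T) · exp (-S(T_i))`, an average over the arboreal
distribution, lies in the kernel of the Laplacian and satisfies `ρ_1 = 1`. -/
theorem arboreal_reformulation {n : ℕ} (hn : 0 < n) (ℓ : Fin n → Fin n → ℝ)
    (hℓ : ∀ i j, 0 ≤ ℓ i j) (hsc : StronglyConnected ℓ) (hrev : Reversible ℓ) :
    (LabelLaplacian ℓ).mulVec (fun i =>
      ∑ T ∈ Trees ℓ ⟨0, hn⟩,
        (treeWeight ℓ ⟨0, hn⟩ T / ∑ T' ∈ Trees ℓ ⟨0, hn⟩, treeWeight ℓ ⟨0, hn⟩ T') *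
          Real.exp (-pathAction ℓ (treePath T ⟨0, hn⟩ i))) = 0 ∧
    (∑ T ∈ Trees ℓ ⟨0, hn⟩,
        (treeWeight ℓ ⟨0, hn⟩ T / ∑ T' ∈ Trees ℓ ⟨0, hn⟩, treeWeight ℓ ⟨0, hn⟩ T') *
          Real.exp (-pathAction ℓ (treePath T ⟨0, hn⟩ ⟨0, hn⟩))) = 1 := by
  set r : Fin n := ⟨0, hn⟩
  have hρ : ∀ i, ∑ T ∈ Trees ℓ r, (treeWeight ℓ r T / ∑ T' ∈ Trees ℓ r, treeWeight ℓ r T') *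
      Real.exp (-pathAction ℓ (treePath T r i)) = (treeSum ℓ r)⁻¹ * treeSum ℓ i := fun i => by
    rw [← sum_treeWeight_mul_exp_neg_pathAction hrev r i, mul_sum]
    exact sum_congr rfl fun T _ => by rw [treeSum]; ring
  simp_rw [hρ]
  refine ⟨?_, inv_mul_cancel₀ (treeSum_pos hsc r).ne'⟩
  rw [show (fun i => (treeSum ℓ r)⁻¹ * treeSum ℓ i) = (treeSum ℓ r)⁻¹ • treeSum ℓ from rfl,
    Matrix.mulVec_smul, labelLaplacian_mulVec_treeSum hℓ, smul_zero]
end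

section
/- Tree-reversal bijection: for a finite strongly connected reversible graph G and vertices i ≠ j, the map Φ_{i,j}: Θ_i → Θ_j that takes a spanning tree T rooted at i and reverses the edges on the unique tree path from j to i is a well-defined bijection between the sets of spanning trees rooted at i and rooted at j. -/
open Finset

attribute [local instance] Classical.propDecidable

/-- The Laplacian matrix: `L j i = ℓ i j` off the diagonal,
`L i i = -∑_{k ≠ i} ℓ i k`. -/
noncomputable def laplacianMatrix {n : ℕ} (ℓ : Fin n → Fin n → ℝ) :
    Matrix (Fin n) (Fin n) ℝ :=
  fun j i => if j = i then -∑ k ∈ univ.filter (· ≠ i), ℓ i k else ℓ i j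

/-! Write the tree path from `j` to the root `r` as `j, t j, …, t^[m] j = r`, with `m` the first
hitting time, so that its vertices are distinct. Reversal sends `t^[s+1] j` to `t^[s] j`, fixes `j`
and agrees with `t` elsewhere. The reversed edges are edges by reversibility, and every vertex
reaches `j` by following `t` until it meets the path and then walking the path backwards. In the
reversed tree the path from `r` to `j` is the old path read backwards, so reversing it again
restores `t`: `Φ_{j,i}` inverts `Φ_{i,j}`. -/

theorem injOn_iterate_Iic {α : Type*} {t : α → α} {j r : α} {m : ℕ}
    (hm : t^[m] j = r) (hmin : ∀ s < m, t^[s] j ≠ r) :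
    Set.InjOn (fun s => t^[s] j) (Set.Iic m) := by
  -- a repetition `t^[a] j = t^[b] j` with `a < b ≤ m` would make `j` hit `r` at `m - (b - a)`
  have no_repeat : ∀ a b, a < b → b ≤ m → t^[a] j ≠ t^[b] j := by
    intro a b hab hbm heq
    apply hmin (m - (b - a)) (by omega)
    rw [show m - (b - a) = (m - b) + a by omega, Function.iterate_add_apply, heq,
      ← Function.iterate_add_apply, show m - b + b = m by omega, hm]
  intro a (ha : a ≤ m) b (hb : b ≤ m) heq
  rcases lt_trichotomy a b with h | h | h
  · exact absurd heq (no_repeat a b h hb)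
  · exact h
  · exact absurd heq.symm (no_repeat b a h ha)

theorem lt_card_of_iterate_eq_of_forall_lt_ne {α : Type*} [Fintype α] {t : α → α} {j r : α}
    {m : ℕ} (hm : t^[m] j = r) (hmin : ∀ s < m, t^[s] j ≠ r) : m < Fintype.card α := by
  have hcard := Finset.card_le_card_of_injOn (fun s => t^[s] j)
    (s := Finset.range (m + 1)) (t := Finset.univ) (fun _ _ => Finset.mem_univ _)
    ((injOn_iterate_Iic hm hmin).mono fun s hs => by simpa [Nat.lt_succ_iff] using hs)
  simpa using hcard

theorem exists_iterate_eq_and_forall_lt_ne {α : Type*} {t : α → α} {j r : α}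
    (h : ∃ k, t^[k] j = r) : ∃ m, t^[m] j = r ∧ ∀ s < m, t^[s] j ≠ r :=
  ⟨Nat.find h, Nat.find_spec h, fun _ hs => Nat.find_min h hs⟩

theorem exists_iterate_eq_of_eqOn_compl {α : Type*} {t t' : α → α} {S : Set α} {j : α}
    (hagree : ∀ v ∉ S, t' v = t v) (hS : ∀ v ∈ S, ∃ k, t'^[k] v = j) :
    ∀ k v, t^[k] v ∈ S → ∃ k', t'^[k'] v = j := by
  intro k
  induction k with
  | zero => exact hS
  | succ k ih =>
    intro v hv
    by_cases hvS : v ∈ S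
    · exact hS v hvS
    · obtain ⟨k', hk'⟩ := ih (t v) hv
      exact ⟨k' + 1, by rwa [Function.iterate_succ_apply, hagree v hvS]⟩

theorem List.zip_tail_map_range {α : Type*} (k : ℕ) (f : ℕ → α) :
    ((List.range (k + 1)).map f).zip ((List.range (k + 1)).map f).tail
      = (List.range k).map (fun s => (f s, f (s + 1))) := by
  apply List.ext_getElem <;> simp

section ReverseTree

variable {n : ℕ} {t : Fin n → Fin n} {r j : Fin n} {m : ℕ}

theorem treePathAux_self (k : ℕ) : treePathAux t r k r = [r] := by
  cases k <;> simp [treePathAux]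

theorem treePathAux_eq_map_range (hm : t^[m] j = r) (hmin : ∀ s < m, t^[s] j ≠ r)
    {k : ℕ} (hk : m ≤ k) :
    treePathAux t r k j = (List.range (m + 1)).map (fun s => t^[s] j) := by
  induction m generalizing j k with
  | zero => subst hm; simp [treePathAux_self]
  | succ m ih =>
    obtain ⟨k, rfl⟩ : ∃ k', k = k' + 1 := ⟨k - 1, by omega⟩
    have hj : j ≠ r := hmin 0 (Nat.succ_pos m)
    rw [treePathAux, if_neg hj, ih hm (fun s hs => hmin (s + 1) (by omega)) (by omega)]
    simp [List.range_succ_eq_map, List.map_map, Function.comp_def, Function.iterate_succ_apply]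

theorem treePath_eq_map_range (hm : t^[m] j = r) (hmin : ∀ s < m, t^[s] j ≠ r) :
    treePath t r j = (List.range (m + 1)).map (fun s => t^[s] j) :=
  treePathAux_eq_map_range hm hmin
    ((lt_card_of_iterate_eq_of_forall_lt_ne hm hmin).trans_eq (Fintype.card_fin n)).le

theorem reverseTree_iterate_succ (hm : t^[m] j = r) (hmin : ∀ s < m, t^[s] j ≠ r)
    {s : ℕ} (hs : s < m) : reverseTree t r j (t^[s + 1] j) = t^[s] j := by
  unfold reverseTree
  rw [treePath_eq_map_range hm hmin, List.zip_tail_map_range]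
  set edges := (List.range m).map (fun s => (t^[s] j, t^[s + 1] j))
  have hfound : (edges.find? (fun e => e.2 == t^[s + 1] j)).isSome := by
    rw [List.find?_isSome]
    exact ⟨_, List.mem_map.2 ⟨s, List.mem_range.2 hs, rfl⟩, by simp⟩
  obtain ⟨e, he⟩ := Option.isSome_iff_exists.1 hfound
  obtain ⟨s', hs', rfl⟩ := List.mem_map.1 (List.mem_of_find?_eq_some he)
  have hs's : s' + 1 = s + 1 := injOn_iterate_Iic hm hmin
    (show s' + 1 ≤ m from List.mem_range.1 hs') (show s + 1 ≤ m by omega)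
    (by simpa using List.find?_some he)
  rw [he]
  simp only [Option.elim, show s' = s by omega]

theorem reverseTree_of_forall_ne (hm : t^[m] j = r) (hmin : ∀ s < m, t^[s] j ≠ r)
    {v : Fin n} (hv : ∀ s < m, v ≠ t^[s + 1] j) :
    reverseTree t r j v = if v = j then j else t v := by
  unfold reverseTree
  rw [treePath_eq_map_range hm hmin, List.zip_tail_map_range]
  have hnone : ((List.range m).map (fun s => (t^[s] j, t^[s + 1] j))).find?
      (fun e => e.2 == v) = none := by
    simp only [List.find?_eq_none, List.mem_map, List.mem_range]
    rintro _ ⟨s, hs, rfl⟩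
    simpa using (hv s hs).symm
  rw [hnone]
  rfl

theorem reverseTree_self (hm : t^[m] j = r) (hmin : ∀ s < m, t^[s] j ≠ r) :
    reverseTree t r j j = j := by
  rw [reverseTree_of_forall_ne hm hmin, if_pos rfl]
  intro s hs heq
  exact absurd (injOn_iterate_Iic hm hmin (Set.mem_Iic.2 (Nat.zero_le m))
    (show s + 1 ≤ m by omega) heq) (by omega)

theorem reverseTree_of_forall_le_ne (hm : t^[m] j = r) (hmin : ∀ s < m, t^[s] j ≠ r)
    {v : Fin n} (hv : ∀ s ≤ m, v ≠ t^[s] j) : reverseTree t r j v = t v := by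
  rw [reverseTree_of_forall_ne hm hmin (fun s hs => hv (s + 1) hs)]
  exact if_neg (hv 0 (Nat.zero_le m))

theorem iterate_reverseTree_iterate (hm : t^[m] j = r) (hmin : ∀ s < m, t^[s] j ≠ r)
    {u s : ℕ} (hu : u ≤ m) (hs : s ≤ u) :
    (reverseTree t r j)^[s] (t^[u] j) = t^[u - s] j := by
  induction s with
  | zero => rfl
  | succ s ih =>
    rw [Function.iterate_succ_apply', ih (by omega),
      show u - s = (u - (s + 1)) + 1 by omega]
    exact reverseTree_iterate_succ hm hmin (by omega)

theorem iterate_reverseTree_root (hm : t^[m] j = r) (hmin : ∀ s < m, t^[s] j ≠ r)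
    {s : ℕ} (hs : s ≤ m) : (reverseTree t r j)^[s] r = t^[m - s] j := by
  simpa only [hm] using iterate_reverseTree_iterate hm hmin le_rfl hs

theorem iterate_reverseTree_root_ne (hm : t^[m] j = r) (hmin : ∀ s < m, t^[s] j ≠ r)
    {s : ℕ} (hs : s < m) : (reverseTree t r j)^[s] r ≠ j := by
  rw [iterate_reverseTree_root hm hmin hs.le]
  intro heq
  have := injOn_iterate_Iic hm hmin (show m - s ≤ m by omega) (Set.mem_Iic.2 (Nat.zero_le m)) heq
  omega

theorem isSpanningTree_reverseTree {ℓ : Fin n → Fin n → ℝ} (hrev : Reversible ℓ)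
    (ht : IsSpanningTree ℓ r t) (j : Fin n) : IsSpanningTree ℓ j (reverseTree t r j) := by
  obtain ⟨m, hm, hmin⟩ := exists_iterate_eq_and_forall_lt_ne (ht.2.2 j)
  obtain ⟨-, hedge, hreach⟩ := ht
  refine ⟨reverseTree_self hm hmin, fun v hv => ?_, fun v => ?_⟩
  · by_cases hpath : ∃ s < m, v = t^[s + 1] j
    · obtain ⟨s, hs, rfl⟩ := hpath
      rw [reverseTree_iterate_succ hm hmin hs, Function.iterate_succ_apply']
      exact (hrev _ _).1 (hedge _ (hmin s hs))
    · push Not at hpath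
      rw [reverseTree_of_forall_ne hm hmin hpath, if_neg hv]
      refine hedge v fun hvr => ?_
      cases m with
      | zero => exact hv (hvr.trans hm.symm)
      | succ m => exact hpath m (Nat.lt_succ_self m) (hvr.trans hm.symm)
  · -- off the path nothing changes, and from the path the reversed edges lead to `j`
    obtain ⟨k, hk⟩ := hreach v
    refine exists_iterate_eq_of_eqOn_compl (S := {w | ∃ u ≤ m, w = t^[u] j}) ?_ ?_ k v
      ⟨m, le_rfl, hk.trans hm.symm⟩
    · exact fun w hw => reverseTree_of_forall_le_ne hm hmin fun u hu heq => hw ⟨u, hu, heq⟩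
    · rintro _ ⟨u, hu, rfl⟩
      exact ⟨u, by rw [iterate_reverseTree_iterate hm hmin hu le_rfl, Nat.sub_self]; rfl⟩

theorem reverseTree_reverseTree (hr : t r = r) (hj : ∃ k, t^[k] j = r) :
    reverseTree (reverseTree t r j) j r = t := by
  obtain ⟨m, hm, hmin⟩ := exists_iterate_eq_and_forall_lt_ne hj
  have hm' : (reverseTree t r j)^[m] r = j := by
    rw [iterate_reverseTree_root hm hmin le_rfl, Nat.sub_self]; rfl
  have hmin' := fun s (hs : s < m) => iterate_reverseTree_root_ne hm hmin hs
  funext v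
  by_cases hpath : ∃ u < m, v = t^[u] j
  · obtain ⟨u, hu, rfl⟩ := hpath
    -- `t^[u] j` is the `(m - u)`-th vertex of the reversed path from `r`
    have h := reverseTree_iterate_succ hm' hmin' (s := m - u - 1) (by omega)
    rwa [iterate_reverseTree_root hm hmin (by omega), iterate_reverseTree_root hm hmin (by omega),
      show m - (m - u - 1 + 1) = u by omega, show m - (m - u - 1) = u + 1 by omega,
      Function.iterate_succ_apply'] at h
  push Not at hpath
  by_cases hvr : v = r
  · rw [hvr, reverseTree_of_forall_ne hm' hmin', if_pos rfl, hr]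
    intro s hs heq
    rw [iterate_reverseTree_root hm hmin hs] at heq
    exact hmin _ (by omega) heq.symm
  · have hoff : ∀ u ≤ m, v ≠ t^[u] j := fun u hu =>
      (eq_or_lt_of_le hu).elim (fun h => h ▸ hm ▸ hvr) (hpath u)
    rw [reverseTree_of_forall_le_ne hm' hmin', reverseTree_of_forall_le_ne hm hmin hoff]
    intro s hs
    rw [iterate_reverseTree_root hm hmin hs]
    exact hoff _ (by omega)

end ReverseTree

theorem reverseTree_bijOn_general {n : ℕ} (ℓ : Fin n → Fin n → ℝ)
    (hrev : Reversible ℓ)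
    (i j : Fin n) :
    Set.BijOn (fun t => reverseTree t i j) (Trees ℓ i : Set (Fin n → Fin n))
      (Trees ℓ j : Set (Fin n → Fin n)) := by
  have mem_trees : ∀ r t, t ∈ (Trees ℓ r : Set _) ↔ IsSpanningTree ℓ r t := by
    simp [Trees]
  refine Set.InvOn.bijOn (f' := fun t => reverseTree t j i) ⟨?_, ?_⟩ ?_ ?_
  · intro t ht
    obtain ⟨hr, -, hreach⟩ := (mem_trees i t).1 ht
    exact reverseTree_reverseTree hr (hreach j)
  · intro t ht
    obtain ⟨hr, -, hreach⟩ := (mem_trees j t).1 ht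
    exact reverseTree_reverseTree hr (hreach i)
  · exact fun t ht => (mem_trees j _).2 (isSpanningTree_reverseTree hrev ((mem_trees i t).1 ht) j)
  · exact fun t ht => (mem_trees i _).2 (isSpanningTree_reverseTree hrev ((mem_trees j t).1 ht) i)

/-- The tree-reversal map `Φ_{i,j}`, which reverses the edges on the unique tree
path from `j` to the root `i`, is a bijection from `Θ_i` onto `Θ_j`. -/
theorem reverseTree_bijOn {n : ℕ} (ℓ : Fin n → Fin n → ℝ)
    (hℓ : ∀ i j, 0 ≤ ℓ i j) (hsc : StronglyConnected ℓ) (hrev : Reversible ℓ)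
    (i j : Fin n) (hij : i ≠ j) :
    Set.BijOn (fun t => reverseTree t i j) (Trees ℓ i : Set (Fin n → Fin n))
      (Trees ℓ j : Set (Fin n → Fin n)) :=
  reverseTree_bijOn_general ℓ hrev i j
end
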